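/- Let k ≥ 3 be odd and let A be a 0-rooted finite subset of {0,...,k} with A ≠ {0,...,k}. Then there is no pair of finite sets C, D ⊆ ℕ with D + C = A, max(C) ≥ max(D), and D = {0, (k+1)/2}; moreover if B + C = A with max(B) ≥ max(C) then the k-promoted set B_C (where B_C = B ∪ {s ∈ [0,k]\A : s < max(C)} ∪ {s - max(C) : s ∈ [0,k]\A, s ≥ max(C)}) never equals {0, (k+1)/2}. -/

import Mathlib

/-!
Write `h = (k + 1) / 2`, so `k = 2h - 1`; a translate `h + C` inside `[k]` forces `max C < h`.
If the promoted set `B_C` lies in `{0, h}`, then so does `B`, and `0 ∈ B`. When `max B = h`,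
`m = max C ≤ h`, and a missing `s ∈ [k] \ A` lands in `{0, h}` only if `s = m` or `s = h + m`,
both of which lie in `B + C = A`; so nothing is missing. When `max B = 0`, we have
`B = C = A = {0}`, and the missing element `1` is promoted to `1 ∉ {0, h}`.
-/

open Pointwise

/-- The `k`-promotion of a factor: given the other factor's max `m`, append to `S`
each missing element `s ∈ [0,k] \ A` with `s < m`, and `s - m` for `s ≥ m`. -/
def promote (k : ℕ) (A S : Finset ℕ) (m : ℕ) : Finset ℕ :=
  S ∪ ((Finset.range (k + 1) \ A).filter (· < m)) ∪
    (((Finset.range (k + 1) \ A).filter (m ≤ ·)).image (· - m))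

namespace Finset

theorem zero_mem_left_of_zero_mem_add {B C : Finset ℕ} (h : 0 ∈ B + C) : 0 ∈ B := by
  obtain ⟨b, hb, c, -, hbc⟩ := mem_add.mp h
  rwa [Nat.eq_zero_of_add_eq_zero_right hbc] at hb

theorem le_max'_add_max' {B C : Finset ℕ} (hB : B.Nonempty) (hC : C.Nonempty) {a : ℕ}
    (ha : a ∈ B + C) : a ≤ B.max' hB + C.max' hC := by
  obtain ⟨b, hb, c, hc, rfl⟩ := mem_add.mp ha
  exact add_le_add (B.le_max' b hb) (C.le_max' c hc)

end Finset

open Finset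

theorem promote_subset_iff {k m : ℕ} {A S T : Finset ℕ} :
    promote k A S m ⊆ T ↔
      S ⊆ T ∧ ∀ r ≤ k, r ∉ A → (r < m → r ∈ T) ∧ (m ≤ r → r - m ∈ T) := by
  simp only [promote, union_subset_iff, image_subset_iff, and_assoc]
  simp only [subset_iff (s₁ := filter _ _), mem_filter, mem_sdiff, mem_range, Nat.lt_succ_iff,
    and_imp, imp_and, forall_and]

theorem range_subset_of_promote_subset_pair {k d m : ℕ} {A S : Finset ℕ} (h0 : 0 ∈ A)
    (hm : m ∈ A) (hdm : d + m ∈ A) (hmd : m ≤ d) (hP : promote k A S m ⊆ {0, d}) :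
    range (k + 1) ⊆ A := by
  intro r hr
  by_contra hrA
  obtain ⟨hlt, hge⟩ := (promote_subset_iff.mp hP).2 r (mem_range_succ_iff.mp hr) hrA
  simp only [mem_insert, mem_singleton] at hlt hge
  rcases lt_or_ge r m with hrm | hrm
  · obtain rfl : r = 0 := by have := hlt hrm; omega
    exact hrA h0
  · obtain rfl | rfl : r = m ∨ r = d + m := by have := hge hrm; omega
    exacts [hrA hm, hrA hdm]

theorem promote_not_subset_pair {k d : ℕ} {A B C : Finset ℕ} (hB : B.Nonempty)
    (hC : C.Nonempty) (hk : 1 ≤ k) (hd : d ≠ 1) (h0 : 0 ∈ A) (hmiss : ¬range (k + 1) ⊆ A)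
    (hsum : B + C = A) (hle : C.max' hC ≤ B.max' hB) :
    ¬promote k A B (C.max' hC) ⊆ {0, d} := by
  intro hP
  have hBd := (promote_subset_iff.mp hP).1
  have hmC := C.max'_mem hC
  rcases mem_insert.mp (hBd (B.max'_mem hB)) with hB0 | hBd'
  · have h1A : 1 ∉ A := fun h1 => by
      have := le_max'_add_max' hB hC (hsum ▸ h1)
      omega
    have h1 := ((promote_subset_iff.mp hP).2 1 hk h1A).2 (by omega)
    simp only [mem_insert, mem_singleton] at h1
    omega
  · rw [mem_singleton] at hBd'
    have h0B : 0 ∈ B := zero_mem_left_of_zero_mem_add (hsum ▸ h0)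
    have hdB : d ∈ B := hBd' ▸ B.max'_mem hB
    refine hmiss (range_subset_of_promote_subset_pair h0 ?_ ?_ (hBd' ▸ hle) hP) <;> rw [← hsum]
    exacts [zero_add (C.max' hC) ▸ add_mem_add h0B hmC, add_mem_add hdB hmC]

theorem stmt1 (k : ℕ) (hk : 3 ≤ k) (hodd : Odd k) (A : Finset ℕ)
    (h0 : 0 ∈ A) (hsub : A ⊆ Finset.range (k + 1)) (hne : A ≠ Finset.range (k + 1)) :
    (¬ ∃ (C : Finset ℕ) (hC : C.Nonempty),
        ({0, (k + 1) / 2} : Finset ℕ) + C = A ∧ (k + 1) / 2 ≤ C.max' hC) ∧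
    (∀ (B C : Finset ℕ) (hB : B.Nonempty) (hC : C.Nonempty),
        B + C = A → C.max' hC ≤ B.max' hB →
        promote k A B (C.max' hC) ≠ ({0, (k + 1) / 2} : Finset ℕ)) := by
  refine ⟨?_, fun B C hB hC hsum hle hP => ?_⟩
  · rintro ⟨C, hC, hsum, hmax⟩
    have hmem : (k + 1) / 2 + C.max' hC ∈ A :=
      hsum ▸ add_mem_add (by simp) (C.max'_mem hC)
    have := mem_range.mp (hsub hmem)
    obtain ⟨j, rfl⟩ := hodd
    omega
  · exact promote_not_subset_pair hB hC (by omega) (by omega) h0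
      (fun h => hne (hsub.antisymm h)) hsum hle hP.subset
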